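/- Let p ∈ (1,2), ε > 0, k > 0 and define Ψ(k,p,ε) as the explicit rational function Ψ(k,p,ε) = (1+ε)² + 1 - (1+ε)·[(1+k²+(1+ε)²k²)(2(p-1)(1+ε)k² + (2-p)(1+(1+ε)²k²))] / [(1+(1+ε)²k²)(1+(1+ε)²k²+(p-1)k²)]. Then the partial derivative of Ψ with respect to p is nonnegative, i.e., Ψ is monotone nondecreasing in p on (1,2). -/

import Mathlib

/-!
As a function of `p`, `Ψ` is a constant minus a quotient of two affine functions of `p`, so its
derivative is a constant over the square of the denominator. Writing `u = 1 + (1+ε)²k²`, the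
constant works out to `(1+ε) (1 + k² + (1+ε)²k²) (1 + ε²k²) u²`, which is nonnegative as soon
as `ε ≥ -1`; the denominator `u (u + (p-1)k²)` is positive for `p > 1`.
-/

/-- The rational function `Ψ(k,p,ε)` appearing in the proof of Proposition 3.1. -/
noncomputable def Psi (k p ε : ℝ) : ℝ :=
  (1 + ε) ^ 2 + 1 - (1 + ε) *
    ((1 + k ^ 2 + (1 + ε) ^ 2 * k ^ 2) *
      (2 * (p - 1) * (1 + ε) * k ^ 2 + (2 - p) * (1 + (1 + ε) ^ 2 * k ^ 2))) /
    ((1 + (1 + ε) ^ 2 * k ^ 2) * (1 + (1 + ε) ^ 2 * k ^ 2 + (p - 1) * k ^ 2))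

theorem hasDerivAt_affine_div_affine {𝕜 : Type*} [NontriviallyNormedField 𝕜] {a b c d x : 𝕜}
    (h : c * x + d ≠ 0) :
    HasDerivAt (fun q => (a * q + b) / (c * q + d)) ((a * d - b * c) / (c * x + d) ^ 2) x := by
  have hnum : HasDerivAt (fun q => a * q + b) a x := by
    simpa using ((hasDerivAt_id x).const_mul a).add_const b
  have hden : HasDerivAt (fun q => c * q + d) c x := by
    simpa using ((hasDerivAt_id x).const_mul c).add_const d
  exact (hnum.div hden h).congr_deriv (by ring)

theorem hasDerivAt_Psi {k ε p : ℝ} (hp : 1 + (1 + ε) ^ 2 * k ^ 2 + (p - 1) * k ^ 2 ≠ 0) :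
    HasDerivAt (fun q => Psi k q ε)
      ((1 + ε) * (1 + k ^ 2 + (1 + ε) ^ 2 * k ^ 2) * (1 + ε ^ 2 * k ^ 2) /
        (1 + (1 + ε) ^ 2 * k ^ 2 + (p - 1) * k ^ 2) ^ 2) p := by
  set u := 1 + (1 + ε) ^ 2 * k ^ 2
  set A := 1 + k ^ 2 + (1 + ε) ^ 2 * k ^ 2
  have hu : u ≠ 0 := by positivity
  have hPsi : (fun q => Psi k q ε) = fun q =>
      (1 + ε) ^ 2 + 1 - ((1 + ε) * A * (2 * (1 + ε) * k ^ 2 - u) * q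
          + (1 + ε) * A * (2 * u - 2 * (1 + ε) * k ^ 2)) / (u * k ^ 2 * q + u * (u - k ^ 2)) := by
    funext q
    simp only [Psi, u, A]
    congr 2 <;> ring
  have hden_eq : u * k ^ 2 * p + u * (u - k ^ 2) = u * (u + (p - 1) * k ^ 2) := by ring
  have hden : u * k ^ 2 * p + u * (u - k ^ 2) ≠ 0 := hden_eq ▸ mul_ne_zero hu hp
  rw [hPsi]
  refine ((hasDerivAt_affine_div_affine hden).const_sub ((1 + ε) ^ 2 + 1)).congr_deriv ?_
  rw [hden_eq]
  field_simp
  ring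

theorem stmt4_general (ε k : ℝ) (hε : 0 < ε) :
    (∀ p ∈ Set.Ioo (1 : ℝ) 2, 0 ≤ deriv (fun q => Psi k q ε) p) ∧
      MonotoneOn (fun q => Psi k q ε) (Set.Ioo (1 : ℝ) 2) := by
  have hden : ∀ p ∈ Set.Ioo (1 : ℝ) 2, 0 < 1 + (1 + ε) ^ 2 * k ^ 2 + (p - 1) * k ^ 2 :=
    fun p hp => by have := sub_pos.2 hp.1; positivity
  have hderiv : ∀ p ∈ Set.Ioo (1 : ℝ) 2, 0 ≤ deriv (fun q => Psi k q ε) p := by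
    intro p hp
    rw [(hasDerivAt_Psi (hden p hp).ne').deriv]
    positivity
  refine ⟨hderiv, monotoneOn_of_deriv_nonneg (convex_Ioo 1 2) ?_ ?_ ?_⟩
  · exact HasDerivAt.continuousOn fun p hp => hasDerivAt_Psi (hden p hp).ne'
  · rw [interior_Ioo]
    exact fun p hp => (hasDerivAt_Psi (hden p hp).ne').differentiableAt.differentiableWithinAt
  · rwa [interior_Ioo]

/-- For fixed `ε > 0`, `k > 0`, the partial derivative of `Ψ` with respect to `p`
is nonnegative on `(1,2)`, i.e. `Ψ` is monotone nondecreasing in `p` on `(1,2)`. -/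
theorem stmt4 (ε k : ℝ) (hε : 0 < ε) (hk : 0 < k) :
    (∀ p ∈ Set.Ioo (1 : ℝ) 2, 0 ≤ deriv (fun q => Psi k q ε) p) ∧
      MonotoneOn (fun q => Psi k q ε) (Set.Ioo (1 : ℝ) 2) :=
  stmt4_general ε k hε
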